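/- arXiv:2602.18687 — 4 statements merged into one kernel-verified Lean document; each statement's English description precedes it below -/
import Mathlib

section
/- Let Kᵢ = (Id − A)(Eᵢᵢ + Dᵢ)(Id + A), i = 1,…,n, where A(x) = Σ_m x_m A^{(m)} is linear in x with no constant term and Dᵢ(x) are diagonal matrices with entries linear in x. If for all i, j and all constant vectors ξ, η one has ⟨Kᵢ,Kⱼ⟩(ξ,η) + ⟨Kᵢ,Kⱼ⟩(η,ξ) = 0 at x = 0, then a^{(q)}_{rp} = a^{(p)}_{rq} for all pairwise distinct r, p, q. -/
open Matrix

noncomputable def vbracket {n : ℕ} (V W : (Fin n → ℝ) → (Fin n → ℝ)) :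
    (Fin n → ℝ) → (Fin n → ℝ) :=
  fun x => fderiv ℝ W x (V x) - fderiv ℝ V x (W x)

noncomputable def opApply {n : ℕ} (L : (Fin n → ℝ) → Matrix (Fin n) (Fin n) ℝ)
    (ξ : (Fin n → ℝ) → (Fin n → ℝ)) : (Fin n → ℝ) → (Fin n → ℝ) :=
  fun x => (L x).mulVec (ξ x)

noncomputable def nijBr {n : ℕ} (L M : (Fin n → ℝ) → Matrix (Fin n) (Fin n) ℝ)
    (ξ η : (Fin n → ℝ) → (Fin n → ℝ)) : (Fin n → ℝ) → (Fin n → ℝ) :=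
  fun x =>
    (M x).mulVec (vbracket (opApply L ξ) η x)
    + (L x).mulVec (vbracket ξ (opApply M η) x)
    - vbracket (opApply L ξ) (opApply M η) x
    - (L x * M x).mulVec (vbracket ξ η x)

/-- The `i`-th constant coordinate vector field on `ℝⁿ`. -/
def eVF {n : ℕ} (i : Fin n) : (Fin n → ℝ) → (Fin n → ℝ) := fun _ => Pi.single i 1


section Aux
attribute [local instance] Matrix.linftyOpNormedAddCommGroup Matrix.linftyOpNormedRing
  Matrix.linftyOpNormedAlgebra

variable {n : ℕ}

noncomputable def matCLM (C : Fin n → Matrix (Fin n) (Fin n) ℝ) :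
    (Fin n → ℝ) →L[ℝ] Matrix (Fin n) (Fin n) ℝ :=
  ∑ m, (ContinuousLinearMap.proj m : (Fin n → ℝ) →L[ℝ] ℝ).smulRight (C m)

lemma matCLM_apply (C : Fin n → Matrix (Fin n) (Fin n) ℝ) (v : Fin n → ℝ) :
    matCLM C v = ∑ m, v m • C m := by
  simp [matCLM]

noncomputable def mulVecCLM (ξ : Fin n → ℝ) :
    Matrix (Fin n) (Fin n) ℝ →L[ℝ] (Fin n → ℝ) :=
  LinearMap.toContinuousLinearMap
    { toFun := fun M => M.mulVec ξ
      map_add' := fun M N => Matrix.add_mulVec M N ξ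
      map_smul' := fun c M => Matrix.smul_mulVec c M ξ }

lemma mulVecCLM_apply (ξ : Fin n → ℝ) (M : Matrix (Fin n) (Fin n) ℝ) :
    mulVecCLM ξ M = M.mulVec ξ := rfl

lemma diag_eq (d : Fin n → Fin n → ℝ) (x : Fin n → ℝ) :
    Matrix.diagonal (fun p => ∑ m, x m * d p m)
      = matCLM (fun m => Matrix.diagonal (fun p => d p m)) x := by
  rw [matCLM_apply]
  ext a b
  by_cases h : a = b <;>
    simp [Matrix.diagonal_apply, Matrix.sum_apply, h, Finset.mul_sum]

lemma keyDeriv (Am : Fin n → Matrix (Fin n) (Fin n) ℝ) (d : Fin n → Fin n → ℝ)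
    (i : Fin n) (ξ v : Fin n → ℝ) :
    fderiv ℝ (fun x : Fin n → ℝ => ((1 - ∑ m, x m • Am m)
        * (Matrix.single i i (1 : ℝ) + Matrix.diagonal (fun p => ∑ m, x m * d p m))
        * (1 + ∑ m, x m • Am m)).mulVec ξ) 0 v
    = (Matrix.single i i (1 : ℝ) * (∑ m, v m • Am m)
        + Matrix.diagonal (fun p => ∑ m, v m * d p m)
        - (∑ m, v m • Am m) * Matrix.single i i (1 : ℝ)).mulVec ξ := by
  set E := Matrix.single i i (1 : ℝ) with hE
  set Φ := matCLM Am with hΦ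
  set Ψ := matCLM (fun m => Matrix.diagonal (fun p => d p m)) with hΨ
  have hAfun : (fun x : Fin n → ℝ => ∑ m, x m • Am m) = ⇑Φ :=
    funext fun x => (matCLM_apply Am x).symm
  have hA : HasFDerivAt (fun x : Fin n → ℝ => ∑ m, x m • Am m) Φ 0 := by
    rw [hAfun]; exact Φ.hasFDerivAt
  have hD : HasFDerivAt
      (fun x : Fin n → ℝ => Matrix.diagonal (fun p => ∑ m, x m * d p m)) Ψ 0 := by
    have : (fun x : Fin n → ℝ => Matrix.diagonal (fun p => ∑ m, x m * d p m)) = ⇑Ψ :=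
      funext fun x => diag_eq d x
    rw [this]; exact Ψ.hasFDerivAt
  have h1 : HasFDerivAt (fun x : Fin n → ℝ => 1 - ∑ m, x m • Am m) (-Φ) 0 :=
    hA.const_sub 1
  have h2 : HasFDerivAt (fun x : Fin n → ℝ =>
      E + Matrix.diagonal (fun p => ∑ m, x m * d p m)) Ψ 0 := hD.const_add E
  have h3 : HasFDerivAt (fun x : Fin n → ℝ => 1 + ∑ m, x m • Am m) Φ 0 :=
    hA.const_add 1
  have h := (h1.mul' h2).mul' h3
  have hcomp := (mulVecCLM ξ).hasFDerivAt.comp (0 : Fin n → ℝ) h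
  have hfun : (fun x : Fin n → ℝ => ((1 - ∑ m, x m • Am m)
      * (E + Matrix.diagonal (fun p => ∑ m, x m * d p m))
      * (1 + ∑ m, x m • Am m)).mulVec ξ)
      = ⇑(mulVecCLM ξ) ∘ (fun x : Fin n → ℝ => (1 - ∑ m, x m • Am m)
      * (E + Matrix.diagonal (fun p => ∑ m, x m * d p m))
      * (1 + ∑ m, x m • Am m)) := rfl
  rw [hfun, (show HasFDerivAt (⇑(mulVecCLM ξ) ∘ (fun x : Fin n → ℝ => (1 - ∑ m, x m • Am m)
      * (E + Matrix.diagonal (fun p => ∑ m, x m * d p m))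
      * (1 + ∑ m, x m • Am m))) _ 0 from hcomp).fderiv]
  erw [ContinuousLinearMap.comp_apply, mulVecCLM_apply]
  congr 1
  simp only [Pi.mul_apply, ContinuousLinearMap.add_apply, ContinuousLinearMap.smul_apply,
    ContinuousLinearMap.neg_apply, ContinuousLinearMap.coe_smul', ContinuousLinearMap.coe_add',
    ContinuousLinearMap.coe_neg', Pi.add_apply, Pi.smul_apply, Pi.neg_apply, MulOpposite.smul_eq_mul_unop,
    MulOpposite.unop_op, Pi.zero_apply, zero_smul, Finset.sum_const_zero, sub_zero, zero_mul, mul_zero,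
    Matrix.diagonal_zero, add_zero, one_smul, one_mul, mul_one, neg_mul, smul_eq_mul]
  rw [diag_eq d v]
  show E * matCLM Am v + ((1 : Matrix (Fin n) (Fin n) ℝ) * matCLM (fun m => Matrix.diagonal (fun p => d p m)) v
    + -matCLM Am v * E) = _
  rw [one_mul, matCLM_apply, matCLM_apply]
  rw [neg_mul, sub_eq_add_neg, add_assoc]

end Aux

theorem stmt7 {n : ℕ} (hn : 3 ≤ n) (Am : Fin n → Matrix (Fin n) (Fin n) ℝ)
    (d : Fin n → Fin n → Fin n → ℝ)
    (K : Fin n → (Fin n → ℝ) → Matrix (Fin n) (Fin n) ℝ)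
    (hK : ∀ i x, K i x =
      (1 - ∑ m, x m • Am m)
        * (Matrix.single i i (1 : ℝ) + Matrix.diagonal (fun p => ∑ m, x m * d i p m))
        * (1 + ∑ m, x m • Am m))
    (hsym : ∀ (i j : Fin n) (ξ η : Fin n → ℝ),
      nijBr (K i) (K j) (fun _ => ξ) (fun _ => η) 0
        + nijBr (K i) (K j) (fun _ => η) (fun _ => ξ) 0 = 0) :
    ∀ r p q : Fin n, r ≠ p → r ≠ q → p ≠ q → Am q r p = Am p r q := by
  intro r p q hrp hrq hpq
  have hK0 : ∀ i, K i 0 = Matrix.single i i (1 : ℝ) := by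
    intro i; rw [hK i 0]; simp
  have hKd : ∀ (i : Fin n) (ξ v : Fin n → ℝ),
      fderiv ℝ (fun x => (K i x).mulVec ξ) 0 v
        = (Matrix.single i i (1 : ℝ) * (∑ m, v m • Am m)
            + Matrix.diagonal (fun p' => ∑ m, v m * d i p' m)
            - (∑ m, v m • Am m) * Matrix.single i i (1 : ℝ)).mulVec ξ := by
    intro i ξ v
    have hfun : (fun x => (K i x).mulVec ξ) = (fun x : Fin n → ℝ => ((1 - ∑ m, x m • Am m)
        * (Matrix.single i i (1 : ℝ) + Matrix.diagonal (fun p' => ∑ m, x m * d i p' m))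
        * (1 + ∑ m, x m • Am m)).mulVec ξ) := by
      funext x; rw [hK i x]
    rw [hfun, keyDeriv]
  have hs := hsym p q (Pi.single p 1) (Pi.single q 1)
  have hr := congrFun hs r
  simp only [nijBr, vbracket] at hr
  unfold opApply at hr
  beta_reduce at hr
  rw [hKd, hKd, hKd, hKd] at hr
  rw [hKd, hKd] at hr
  simp only [hK0, fderiv_fun_const] at hr
  simp [Matrix.mulVec, dotProduct, Matrix.mul_apply, Matrix.sub_apply, Matrix.add_apply,
    Matrix.diagonal_apply, Matrix.sum_apply, Matrix.smul_apply, Matrix.single, Matrix.of_apply,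
    Pi.single_apply, Finset.sum_ite_eq, Finset.sum_ite_eq', mul_ite, ite_mul, mul_zero, zero_mul,
    hrp, hrq, hpq, hrp.symm, hrq.symm, hpq.symm] at hr
  have h0 : (of fun i' j' : Fin n => if q = i' ∧ q = j' then (1:ℝ) else 0).col p = 0 := by
    ext i; simp [hpq.symm]
  have h0' : (of fun i' j' : Fin n => if p = i' ∧ p = j' then (1:ℝ) else 0).col q = 0 := by
    ext i; simp [hpq]
  rw [h0, h0'] at hr
  simp only [map_zero, Pi.zero_apply, sub_zero, sub_self, add_zero] at hr
  linarith [hr]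
end

section
/- Let vᵢ = (Id − A)eᵢ, i = 1,…,n, with A(x) = Σ_m x_m A^{(m)} linear in x, and suppose the symmetry condition a^{(q)}_{rp} = a^{(p)}_{rq} holds for all pairwise distinct r, p, q. Then for all i ≠ j, [vᵢ,vⱼ](0) ∈ span{vᵢ(0), vⱼ(0)}. -/
open Matrix

noncomputable def Bmap {n : ℕ} (Am : Fin n → Matrix (Fin n) (Fin n) ℝ) (i : Fin n) :
    (Fin n → ℝ) →L[ℝ] (Fin n → ℝ) :=
  ∑ m, (ContinuousLinearMap.proj m).smulRight ((Am m).mulVec (Pi.single i 1))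

lemma Bmap_apply {n : ℕ} (Am : Fin n → Matrix (Fin n) (Fin n) ℝ) (i : Fin n)
    (x : Fin n → ℝ) :
    Bmap Am i x = (∑ m, x m • Am m).mulVec (Pi.single i 1) := by
  funext r
  simp [Bmap, ContinuousLinearMap.sum_apply, Matrix.mulVec_single,
    Finset.sum_apply, Matrix.smul_apply, Matrix.sum_apply]

lemma fderiv_v {n : ℕ} (Am : Fin n → Matrix (Fin n) (Fin n) ℝ)
    (v : Fin n → (Fin n → ℝ) → (Fin n → ℝ))
    (hv : ∀ i x, v i x = Pi.single i 1 - (∑ m, x m • Am m).mulVec (Pi.single i 1))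
    (i : Fin n) (x : Fin n → ℝ) :
    fderiv ℝ (v i) x = -(Bmap Am i : (Fin n → ℝ) →L[ℝ] (Fin n → ℝ)) := by
  have hfun : v i = fun y => Pi.single i 1 - Bmap Am i y := by
    funext y; rw [hv, Bmap_apply]
  rw [hfun, fderiv_const_sub _, (Bmap Am i).fderiv]

theorem stmt11 {n : ℕ} (Am : Fin n → Matrix (Fin n) (Fin n) ℝ)
    (hsym : ∀ r p q : Fin n, r ≠ p → r ≠ q → p ≠ q → Am q r p = Am p r q)
    (v : Fin n → (Fin n → ℝ) → (Fin n → ℝ))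
    (hv : ∀ i x, v i x = Pi.single i 1 - (∑ m, x m • Am m).mulVec (Pi.single i 1))
    (i j : Fin n) (hij : i ≠ j) :
    vbracket (v i) (v j) 0 ∈ Submodule.span ℝ {v i 0, v j 0} := by
  classical
  have hv0 : ∀ k : Fin n, v k 0 = Pi.single k 1 := by
    intro k
    rw [hv]
    simp
    rfl
  have hB : ∀ k l : Fin n, Bmap Am k (Pi.single l 1) = (Am l).mulVec (Pi.single k 1) := by
    intro k l
    rw [Bmap_apply]
    rw [Finset.sum_eq_single l]
    · simp
    · intro m _ hm; simp [Pi.single_apply, hm]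
    · simp
  have hbr : vbracket (v i) (v j) 0 =
      (Am j).mulVec (Pi.single i 1) - (Am i).mulVec (Pi.single j 1) := by
    simp only [vbracket, fderiv_v Am v hv, hv0, ContinuousLinearMap.neg_apply, hB]
    abel
  rw [hbr, hv0, hv0]
  rw [Submodule.mem_span_pair]
  set w : Fin n → ℝ := (Am j).mulVec (Pi.single i 1) - (Am i).mulVec (Pi.single j 1) with hw
  refine ⟨w i, w j, ?_⟩
  funext r
  by_cases hri : r = i
  · subst hri
    simp [Pi.single_apply, hij]
  · by_cases hrj : r = j
    · subst hrj
      simp [Pi.single_apply, hij.symm, Ne.symm hij]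
    · have h0 : w r = 0 := by
        have := hsym r i j hri hrj hij
        simp [hw, Matrix.mulVec_single, this]
      simp [Pi.single_apply, hri, hrj, h0]
end

section
/- Let K₁,…,Kₙ be smooth operator fields near p ∈ ℝⁿ that are linearly independent at p, pairwise commute, and suppose some linear combination Σ cᵢKᵢ has n distinct real eigenvalues at p. Then there exist smooth vector fields v₁,…,vₙ near p, linearly independent at every point of a neighborhood, such that each vₖ is an eigenvector field of every Kᵢ. -/
open Matrix

lemma coordCD {E : Type*} [NormedAddCommGroup E] [NormedSpace ℝ E] {n : ℕ}
    {f : E → (Fin n → ℝ)} {s : Set E} (h : ContDiffOn ℝ (⊤ : ℕ∞) f s) (j : Fin n) :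
    ContDiffOn ℝ (⊤ : ℕ∞) (fun x => f x j) s :=
  ((ContinuousLinearMap.proj j : (Fin n → ℝ) →L[ℝ] ℝ).contDiff).comp_contDiffOn h

lemma eigpair {n : ℕ} (hn : 0 < n) (U : Set (Fin n → ℝ)) (hU : IsOpen U)
    (p : Fin n → ℝ) (hp : p ∈ U)
    (A : (Fin n → ℝ) → Matrix (Fin n) (Fin n) ℝ)
    (hA : ∀ r c, ContDiffOn ℝ (⊤ : ℕ∞) (fun x => A x r c) U)
    (lam : Fin n → ℝ) (hlam : Function.Injective lam)
    (w : Fin n → (Fin n → ℝ)) (hw0 : ∀ j, w j ≠ 0)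
    (hweq : ∀ j, (A p).mulVec (w j) = lam j • w j) (k : Fin n) :
    ∃ (Vk : Set (Fin n → ℝ)) (v : (Fin n → ℝ) → (Fin n → ℝ)) (μ : (Fin n → ℝ) → ℝ),
      IsOpen Vk ∧ p ∈ Vk ∧ Vk ⊆ U ∧ ContDiffOn ℝ (⊤ : ℕ∞) v Vk ∧ ContDiffOn ℝ (⊤ : ℕ∞) μ Vk ∧
      v p = w k ∧ μ p = lam k ∧ ∀ x ∈ Vk, (A x).mulVec (v x) = μ x • v x := by
  haveI : Nonempty (Fin n) := ⟨⟨0, hn⟩⟩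
  classical
  -- linear independence of eigenvectors
  have hW : LinearIndependent ℝ w := by
    refine Module.End.eigenvectors_linearIndependent' ((A p).mulVecLin) lam hlam w ?_
    intro j
    refine Module.End.hasEigenvector_iff.2 ⟨Module.End.mem_eigenspace_iff.2 ?_, hw0 j⟩
    simpa [Matrix.mulVecLin_apply] using hweq j
  have hcard : Fintype.card (Fin n) = Module.finrank ℝ (Fin n → ℝ) := by
    simp [Module.finrank_fin_fun]
  let Bp : Module.Basis (Fin n) ℝ (Fin n → ℝ) := basisOfLinearIndependentOfCardEqFinrank hW hcard
  -- the IFT map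
  set Φ : (Fin n → ℝ) × (Fin n → ℝ) × ℝ → (Fin n → ℝ) × (Fin n → ℝ) × ℝ :=
    fun z => (z.1, (A z.1).mulVec z.2.1 - z.2.2 • z.2.1, w k ⬝ᵥ z.2.1) with hΦdef
  set S : Set ((Fin n → ℝ) × (Fin n → ℝ) × ℝ) := Prod.fst ⁻¹' U with hSdef
  have hS : IsOpen S := hU.preimage continuous_fst
  have hz21 : ∀ j : Fin n, ContDiff ℝ (⊤ : ℕ∞) (fun z : (Fin n → ℝ) × (Fin n → ℝ) × ℝ => z.2.1 j) := by
    intro j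
    exact ((ContinuousLinearMap.proj j : (Fin n → ℝ) →L[ℝ] ℝ).comp
      ((ContinuousLinearMap.fst ℝ (Fin n → ℝ) ℝ).comp (ContinuousLinearMap.snd ℝ (Fin n → ℝ) ((Fin n → ℝ) × ℝ)))).contDiff
  have hz22 : ContDiff ℝ (⊤ : ℕ∞) (fun z : (Fin n → ℝ) × (Fin n → ℝ) × ℝ => z.2.2) :=
    ((ContinuousLinearMap.snd ℝ (Fin n → ℝ) ℝ).comp (ContinuousLinearMap.snd ℝ (Fin n → ℝ) ((Fin n → ℝ) × ℝ))).contDiff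
  have hΦ : ContDiffOn ℝ (⊤ : ℕ∞) Φ S := by
    refine ContDiffOn.prodMk (contDiff_fst.contDiffOn) (ContDiffOn.prodMk ?_ ?_)
    · rw [contDiffOn_pi]
      intro r
      have : (fun z : (Fin n → ℝ) × (Fin n → ℝ) × ℝ => ((A z.1).mulVec z.2.1 - z.2.2 • z.2.1) r)
          = fun z => (∑ j, A z.1 r j * z.2.1 j) - z.2.2 * z.2.1 r := by
        funext z
        simp [Matrix.mulVec, dotProduct, Pi.sub_apply, Pi.smul_apply, smul_eq_mul]
      rw [this]
      refine ContDiffOn.sub ?_ ?_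
      · refine ContDiffOn.sum fun j _ => ContDiffOn.mul ?_ ((hz21 j).contDiffOn)
        exact (hA r j).comp (contDiff_fst.contDiffOn) (fun z hz => hz)
      · exact ContDiffOn.mul hz22.contDiffOn (hz21 r).contDiffOn
    · have : (fun z : (Fin n → ℝ) × (Fin n → ℝ) × ℝ => w k ⬝ᵥ z.2.1) = fun z => ∑ j, w k j * z.2.1 j := by
        funext z; simp [dotProduct]
      rw [this]
      exact ContDiffOn.sum fun j _ => (contDiffOn_const.mul (hz21 j).contDiffOn)
  have hz0S : ((p, w k, lam k) : (Fin n → ℝ) × (Fin n → ℝ) × ℝ) ∈ S := hp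
  set z₀ : (Fin n → ℝ) × (Fin n → ℝ) × ℝ := (p, w k, lam k) with hz₀def
  have hΦz₀ : ContDiffAt ℝ (⊤ : ℕ∞) Φ z₀ := hΦ.contDiffAt (hS.mem_nhds hz0S)
  have hdiff : DifferentiableAt ℝ Φ z₀ := hΦz₀.differentiableAt (by simp)
  set L := fderiv ℝ Φ z₀ with hLdef
  have hL : HasFDerivAt Φ L z₀ := hdiff.hasFDerivAt
  -- the first component of `L u` is `u.1`
  have hfst : ∀ u, (L u).1 = u.1 := by
    have h1' := (ContinuousLinearMap.fst ℝ (Fin n → ℝ) ((Fin n → ℝ) × ℝ)).hasFDerivAt.comp z₀ hL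
    have h1 : HasFDerivAt (fun z => (Φ z).1)
        ((ContinuousLinearMap.fst ℝ (Fin n → ℝ) ((Fin n → ℝ) × ℝ)).comp L) z₀ := h1'
    have h2 : HasFDerivAt (fun z : (Fin n → ℝ) × (Fin n → ℝ) × ℝ => (Φ z).1)
        (ContinuousLinearMap.fst ℝ (Fin n → ℝ) ((Fin n → ℝ) × ℝ)) z₀ := hasFDerivAt_fst
    have h3 := h1.unique h2
    intro u
    have := ContinuousLinearMap.ext_iff.1 h3 u
    simpa using this
  -- the derivative in the last two variables
  set fstC := ContinuousLinearMap.fst ℝ (Fin n → ℝ) ℝ with hfstC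
  set sndC := ContinuousLinearMap.snd ℝ (Fin n → ℝ) ℝ with hsndC
  set q₀ : (Fin n → ℝ) × ℝ := (w k, lam k) with hq₀
  set dotL : (Fin n → ℝ) →ₗ[ℝ] ℝ :=
    { toFun := fun u => w k ⬝ᵥ u
      map_add' := fun a b => by simp [dotProduct_add]
      map_smul' := fun c a => by simp [dotProduct_smul] } with hdotL
  have hA0 : HasFDerivAt (fun q : (Fin n → ℝ) × ℝ => (A p).mulVec q.1)
      ((LinearMap.toContinuousLinearMap ((A p).mulVecLin)).comp fstC) q₀ := by
    have h := ((LinearMap.toContinuousLinearMap ((A p).mulVecLin)).comp fstC).hasFDerivAt (x := q₀)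
    have hfun : (fun q : (Fin n → ℝ) × ℝ => (A p).mulVec q.1)
        = ⇑((LinearMap.toContinuousLinearMap ((A p).mulVecLin)).comp fstC) := by
      funext q; simp [hfstC]
    rw [hfun]; exact h
  have hsm : HasFDerivAt (fun q : (Fin n → ℝ) × ℝ => q.2 • q.1)
      (lam k • fstC + sndC.smulRight (w k)) q₀ := by
    have := (sndC.hasFDerivAt (x := q₀)).smul (fstC.hasFDerivAt (x := q₀))
    exact this
  have hdot : HasFDerivAt (fun q : (Fin n → ℝ) × ℝ => w k ⬝ᵥ q.1)
      ((LinearMap.toContinuousLinearMap dotL).comp fstC) q₀ := by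
    have h := ((LinearMap.toContinuousLinearMap dotL).comp fstC).hasFDerivAt (x := q₀)
    have hfun : (fun q : (Fin n → ℝ) × ℝ => w k ⬝ᵥ q.1)
        = ⇑((LinearMap.toContinuousLinearMap dotL).comp fstC) := by
      funext q; simp [hfstC, hdotL]
    rw [hfun]; exact h
  set D : ((Fin n → ℝ) × ℝ) →L[ℝ] ((Fin n → ℝ) × (Fin n → ℝ) × ℝ) :=
    (0 : ((Fin n → ℝ) × ℝ) →L[ℝ] (Fin n → ℝ)).prod
      ((((LinearMap.toContinuousLinearMap ((A p).mulVecLin)).comp fstC)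
          - (lam k • fstC + sndC.smulRight (w k))).prod
        ((LinearMap.toContinuousLinearMap dotL).comp fstC)) with hD
  have hΨ : HasFDerivAt (fun q : (Fin n → ℝ) × ℝ => Φ (p, q)) D q₀ :=
    HasFDerivAt.prodMk (hasFDerivAt_const p q₀) ((hA0.sub hsm).prodMk hdot)
  have hι : HasFDerivAt (fun q : (Fin n → ℝ) × ℝ => ((p, q) : (Fin n → ℝ) × (Fin n → ℝ) × ℝ))
      ((0 : ((Fin n → ℝ) × ℝ) →L[ℝ] (Fin n → ℝ)).prod (ContinuousLinearMap.id ℝ ((Fin n → ℝ) × ℝ))) q₀ :=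
    HasFDerivAt.prodMk (hasFDerivAt_const p q₀) (hasFDerivAt_id q₀)
  have hchain : HasFDerivAt (fun q : (Fin n → ℝ) × ℝ => Φ (p, q))
      (L.comp ((0 : ((Fin n → ℝ) × ℝ) →L[ℝ] (Fin n → ℝ)).prod (ContinuousLinearMap.id ℝ ((Fin n → ℝ) × ℝ)))) q₀ :=
    hL.comp q₀ hι
  have hLform := hchain.unique hΨ
  have hLval : ∀ δ : (Fin n → ℝ) × ℝ,
      L ((0 : Fin n → ℝ), δ) = ((0 : Fin n → ℝ),
        (A p).mulVec δ.1 - (lam k • δ.1 + δ.2 • w k), w k ⬝ᵥ δ.1) := by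
    intro δ
    have := ContinuousLinearMap.ext_iff.1 hLform δ
    simpa [hD, hfstC, hsndC, hdotL] using this
  -- injectivity of L
  have hker : ∀ u, L u = 0 → u = 0 := by
    intro u hu
    have hu1 : u.1 = 0 := by
      have := hfst u
      rw [hu] at this
      exact this.symm
    have hu0 : u = ((0 : Fin n → ℝ), u.2) := by rw [← hu1]
    have hval := hLval u.2
    rw [← hu0, hu] at hval
    have heq1 : (A p).mulVec u.2.1 - (lam k • u.2.1 + u.2.2 • w k) = 0 := by
      have := congrArg (fun z : (Fin n → ℝ) × (Fin n → ℝ) × ℝ => z.2.1) hval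
      simpa using this.symm
    have heq2 : w k ⬝ᵥ u.2.1 = 0 := by
      have := congrArg (fun z : (Fin n → ℝ) × (Fin n → ℝ) × ℝ => z.2.2) hval
      simpa using this.symm
    set a : Fin n → ℝ := fun j => Bp.repr u.2.1 j with ha
    have hBp : ⇑Bp = w := coe_basisOfLinearIndependentOfCardEqFinrank hW hcard
    have hrep : ∑ j, a j • w j = u.2.1 := by
      have := Bp.sum_repr u.2.1
      rwa [hBp] at this
    have hmv : (A p).mulVec u.2.1 = ∑ j, (a j * lam j) • w j := by
      rw [← hrep]
      have : (A p).mulVec (∑ j, a j • w j) = ∑ j, a j • ((A p).mulVec (w j)) := by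
        simp [Matrix.mulVec_sum, Matrix.mulVec_smul]
      rw [this]
      refine Finset.sum_congr rfl fun j _ => ?_
      rw [hweq j, smul_smul]
    set g : Fin n → ℝ := fun j => a j * (lam j - lam k) - (if j = k then u.2.2 else 0) with hg
    have hsum0 : ∑ j, g j • w j = 0 := by
      have hexp : ∑ j, g j • w j
          = (∑ j, (a j * lam j) • w j) - (∑ j, (lam k * a j) • w j)
            - (∑ j, (if j = k then u.2.2 else 0) • w j) := by
        rw [← Finset.sum_sub_distrib, ← Finset.sum_sub_distrib]
        refine Finset.sum_congr rfl fun j _ => ?_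
        simp only [hg]
        module
      rw [hexp]
      have h2 : ∑ j, (lam k * a j) • w j = lam k • u.2.1 := by
        rw [← hrep, Finset.smul_sum]
        exact Finset.sum_congr rfl fun j _ => (smul_smul _ _ _).symm
      have h3 : ∑ j, (if j = k then u.2.2 else 0) • w j = u.2.2 • w k := by
        simp [ite_smul]
      rw [h2, h3, ← hmv, sub_sub, heq1]
    have hgz := Fintype.linearIndependent_iff.1 hW g hsum0
    have hdl2 : u.2.2 = 0 := by
      have := hgz k
      simp [hg] at this
      exact this
    have haj : ∀ j, j ≠ k → a j = 0 := by
      intro j hj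
      have := hgz j
      simp [hg, hj] at this
      rcases this with h | h
      · exact h
      · exact absurd (sub_eq_zero.1 h) (fun hh => hj (hlam hh))
    have hdw2 : u.2.1 = a k • w k := by
      rw [← hrep]
      rw [Finset.sum_eq_single k (fun j _ hj => by rw [haj j hj, zero_smul]) (by simp)]
    have hak : a k = 0 := by
      rw [hdw2] at heq2
      rw [dotProduct_smul] at heq2
      have hne : w k ⬝ᵥ w k ≠ 0 := fun h => hw0 k (dotProduct_self_eq_zero.1 h)
      rcases mul_eq_zero.1 heq2 with h | h
      · exact h
      · exact absurd h hne
    have : u.2 = 0 := by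
      have : u.2.1 = 0 := by rw [hdw2, hak, zero_smul]
      exact Prod.ext this hdl2
    rw [hu0, this]
    rfl
  have hinj : Function.Injective L := by
    intro a b hab
    have := hker (a - b) (by rw [map_sub, hab, sub_self])
    exact sub_eq_zero.1 this
  have hsurj : Function.Surjective L :=
    (LinearMap.injective_iff_surjective (f := (L : ((Fin n → ℝ) × (Fin n → ℝ) × ℝ) →ₗ[ℝ] _))).1 hinj
  set eL : ((Fin n → ℝ) × (Fin n → ℝ) × ℝ) ≃L[ℝ] ((Fin n → ℝ) × (Fin n → ℝ) × ℝ) :=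
    (LinearEquiv.ofBijective (L : ((Fin n → ℝ) × (Fin n → ℝ) × ℝ) →ₗ[ℝ] _)
      ⟨hinj, hsurj⟩).toContinuousLinearEquiv with heLdef
  have heL : (eL : ((Fin n → ℝ) × (Fin n → ℝ) × ℝ) →L[ℝ] ((Fin n → ℝ) × (Fin n → ℝ) × ℝ)) = L :=
    ContinuousLinearMap.ext fun u => rfl
  have hL' : HasFDerivAt Φ
      ((eL : ((Fin n → ℝ) × (Fin n → ℝ) × ℝ) →L[ℝ] ((Fin n → ℝ) × (Fin n → ℝ) × ℝ))) z₀ := by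
    rw [heL]; exact hL
  set PH := hΦz₀.toOpenPartialHomeomorph Φ hL' (by simp) with hPH
  have hPHcoe : ⇑PH = Φ := hΦz₀.toOpenPartialHomeomorph_coe hL' (by simp)
  have hz₀src : z₀ ∈ PH.source := hΦz₀.mem_toOpenPartialHomeomorph_source hL' (by simp)
  have htar : Φ z₀ ∈ PH.target := hΦz₀.image_mem_toOpenPartialHomeomorph_target hL' (by simp)
  have hfderivC : ContinuousOn (fderiv ℝ Φ) S := hΦ.continuousOn_fderiv_of_isOpen hS (by simp)
  set O : Set ((Fin n → ℝ) × (Fin n → ℝ) × ℝ) :=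
    (S ∩ fderiv ℝ Φ ⁻¹' {T | IsUnit T}) ∩ PH.source with hO
  have hOopen : IsOpen O :=
    (hfderivC.isOpen_inter_preimage hS Units.isOpen).inter PH.open_source
  have hLunit : IsUnit L := by
    refine ⟨⟨L, (eL.symm : ((Fin n → ℝ) × (Fin n → ℝ) × ℝ) →L[ℝ] ((Fin n → ℝ) × (Fin n → ℝ) × ℝ)), ?_, ?_⟩, rfl⟩
    · rw [← heL]
      exact ContinuousLinearMap.ext fun u => by simp
    · rw [← heL]
      exact ContinuousLinearMap.ext fun u => by simp
  have hz₀O : z₀ ∈ O := ⟨⟨hz0S, hLunit⟩, hz₀src⟩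
  set T' : Set ((Fin n → ℝ) × (Fin n → ℝ) × ℝ) := PH.symm.source ∩ ⇑PH.symm ⁻¹' O with hT'
  have hT'open : IsOpen T' := PH.symm.isOpen_inter_preimage hOopen
  have hΦz₀T' : Φ z₀ ∈ T' := by
    constructor
    · rw [OpenPartialHomeomorph.symm_source]; exact htar
    · show PH.symm (Φ z₀) ∈ O
      have hls : PH.symm (Φ z₀) = z₀ := by
        conv_lhs => rw [← hPHcoe]
        exact PH.left_inv hz₀src
      rw [hls]; exact hz₀O
  have hg_smooth : ∀ y ∈ T', ContDiffAt ℝ (⊤ : ℕ∞) (⇑PH.symm) y := by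
    intro y hy
    obtain ⟨hytar, hyO⟩ := hy
    rw [OpenPartialHomeomorph.symm_source] at hytar
    have hzS : PH.symm y ∈ S := hyO.1.1
    have hzunit : IsUnit (fderiv ℝ Φ (PH.symm y)) := hyO.1.2
    have hΦz : ContDiffAt ℝ (⊤ : ℕ∞) Φ (PH.symm y) := hΦ.contDiffAt (hS.mem_nhds hzS)
    set e' := (ContinuousLinearEquiv.unitsEquiv ℝ ((Fin n → ℝ) × (Fin n → ℝ) × ℝ)) hzunit.unit with he'
    have he'coe : (e' : ((Fin n → ℝ) × (Fin n → ℝ) × ℝ) →L[ℝ] ((Fin n → ℝ) × (Fin n → ℝ) × ℝ))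
        = fderiv ℝ Φ (PH.symm y) := by
      have h1 : (e' : ((Fin n → ℝ) × (Fin n → ℝ) × ℝ) →L[ℝ] ((Fin n → ℝ) × (Fin n → ℝ) × ℝ))
          = (hzunit.unit : ((Fin n → ℝ) × (Fin n → ℝ) × ℝ) →L[ℝ] ((Fin n → ℝ) × (Fin n → ℝ) × ℝ)) := rfl
      rw [h1, IsUnit.unit_spec]
    have hF : HasFDerivAt Φ
        (e' : ((Fin n → ℝ) × (Fin n → ℝ) × ℝ) →L[ℝ] ((Fin n → ℝ) × (Fin n → ℝ) × ℝ)) (PH.symm y) := by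
      rw [he'coe]
      exact (hΦz.differentiableAt (by simp)).hasFDerivAt
    exact PH.contDiffAt_symm hytar (by rw [hPHcoe]; exact hF) (by rw [hPHcoe]; exact hΦz)
  set yy : (Fin n → ℝ) → ((Fin n → ℝ) × (Fin n → ℝ) × ℝ) :=
    fun x => (x, 0, w k ⬝ᵥ w k) with hyy
  have hyycont : ContDiff ℝ (⊤ : ℕ∞) yy :=
    contDiff_id.prodMk (contDiff_const.prodMk contDiff_const)
  have hyp : yy p = Φ z₀ := by
    show (p, (0 : Fin n → ℝ), w k ⬝ᵥ w k)
        = (p, (A p).mulVec (w k) - lam k • w k, w k ⬝ᵥ w k)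
    rw [hweq k, sub_self]
  set Vk : Set (Fin n → ℝ) := yy ⁻¹' T' with hVkdef
  have hVkopen : IsOpen Vk := hT'open.preimage hyycont.continuous
  have hpVk : p ∈ Vk := by
    show yy p ∈ T'
    rw [hyp]; exact hΦz₀T'
  set v : (Fin n → ℝ) → (Fin n → ℝ) := fun x => (PH.symm (yy x)).2.1 with hv
  set μ : (Fin n → ℝ) → ℝ := fun x => (PH.symm (yy x)).2.2 with hμ
  have hfirst : ∀ x ∈ Vk, (PH.symm (yy x)).1 = x := by
    intro x hx
    have hyT' : yy x ∈ T' := hx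
    have hr : Φ (PH.symm (yy x)) = yy x := by
      conv_lhs => rw [← hPHcoe]
      refine PH.right_inv ?_
      have := hyT'.1
      rwa [OpenPartialHomeomorph.symm_source] at this
    have := congrArg Prod.fst hr
    simpa using this
  have hrinv : ∀ x ∈ Vk, Φ (PH.symm (yy x)) = yy x := by
    intro x hx
    have hyT' : yy x ∈ T' := hx
    conv_lhs => rw [← hPHcoe]
    refine PH.right_inv ?_
    have := hyT'.1
    rwa [OpenPartialHomeomorph.symm_source] at this
  have hVkU : Vk ⊆ U := by
    intro x hx
    have hzS : PH.symm (yy x) ∈ S := (hx : yy x ∈ T').2.1.1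
    have := hfirst x hx
    rw [← this]
    exact hzS
  have heig : ∀ x ∈ Vk, (A x).mulVec (v x) = μ x • v x := by
    intro x hx
    have hr := hrinv x hx
    have h2 := congrArg (fun z : (Fin n → ℝ) × (Fin n → ℝ) × ℝ => z.2.1) hr
    have h2' : (A ((PH.symm (yy x)).1)).mulVec (v x) - μ x • v x = 0 := h2
    rw [hfirst x hx] at h2'
    exact sub_eq_zero.1 h2'
  have hlinv : PH.symm (yy p) = z₀ := by
    rw [hyp]
    conv_lhs => rw [← hPHcoe]
    exact PH.left_inv hz₀src
  have hvp : v p = w k := by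
    show (PH.symm (yy p)).2.1 = w k
    rw [hlinv]
  have hμp : μ p = lam k := by
    show (PH.symm (yy p)).2.2 = lam k
    rw [hlinv]
  have hcomp : ∀ x ∈ Vk, ContDiffAt ℝ (⊤ : ℕ∞) (fun x' => PH.symm (yy x')) x := by
    intro x hx
    exact (hg_smooth (yy x) hx).comp x hyycont.contDiffAt
  have hvCD : ContDiffOn ℝ (⊤ : ℕ∞) v Vk := by
    intro x hx
    exact ((((ContinuousLinearMap.fst ℝ (Fin n → ℝ) ℝ).comp
      (ContinuousLinearMap.snd ℝ (Fin n → ℝ) ((Fin n → ℝ) × ℝ))).contDiff.contDiffAt).comp x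
        (hcomp x hx)).contDiffWithinAt
  have hμCD : ContDiffOn ℝ (⊤ : ℕ∞) μ Vk := by
    intro x hx
    exact ((((ContinuousLinearMap.snd ℝ (Fin n → ℝ) ℝ).comp
      (ContinuousLinearMap.snd ℝ (Fin n → ℝ) ((Fin n → ℝ) × ℝ))).contDiff.contDiffAt).comp x
        (hcomp x hx)).contDiffWithinAt
  exact ⟨Vk, v, μ, hVkopen, hpVk, hVkU, hvCD, hμCD, hvp, hμp, heig⟩

lemma contDiffOn_finprod {E : Type*} [NormedAddCommGroup E] [NormedSpace ℝ E]
    {ι : Type*} (s : Finset ι) (f : ι → E → ℝ) {t : Set E}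
    (h : ∀ i ∈ s, ContDiffOn ℝ (⊤ : ℕ∞) (f i) t) :
    ContDiffOn ℝ (⊤ : ℕ∞) (fun x => ∏ i ∈ s, f i x) t := by
  classical
  induction s using Finset.induction with
  | empty => simpa using contDiffOn_const
  | @insert i s hni ih =>
    have : (fun x => ∏ j ∈ insert i s, f j x) = fun x => f i x * ∏ j ∈ s, f j x := by
      funext x; rw [Finset.prod_insert hni]
    rw [this]
    exact (h i (Finset.mem_insert_self i s)).mul (ih fun j hj => h j (Finset.mem_insert_of_mem hj))

theorem stmt14 {n : ℕ} (U : Set (Fin n → ℝ)) (hU : IsOpen U) (p : Fin n → ℝ) (hp : p ∈ U)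
    (K : Fin n → (Fin n → ℝ) → Matrix (Fin n) (Fin n) ℝ)
    (hK : ∀ i r c, ContDiffOn ℝ (⊤ : ℕ∞) (fun x => K i x r c) U)
    (hind : LinearIndependent ℝ (fun i => K i p))
    (hcomm : ∀ i j, ∀ x ∈ U, K i x * K j x = K j x * K i x)
    (hev : ∃ c : Fin n → ℝ, ∃ lam : Fin n → ℝ, Function.Injective lam ∧
      ∀ k, ∃ w : Fin n → ℝ, w ≠ 0 ∧ (∑ i, c i • K i p).mulVec w = lam k • w) :
    ∃ (V : Set (Fin n → ℝ)) (v : Fin n → (Fin n → ℝ) → (Fin n → ℝ)),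
      IsOpen V ∧ p ∈ V ∧ V ⊆ U ∧
      (∀ k, ContDiffOn ℝ (⊤ : ℕ∞) (v k) V) ∧
      (∀ x ∈ V, LinearIndependent ℝ (fun k => v k x)) ∧
      (∀ i k, ∃ lam : (Fin n → ℝ) → ℝ, ContDiffOn ℝ (⊤ : ℕ∞) lam V ∧
        ∀ x ∈ V, (K i x).mulVec (v k x) = lam x • v k x) := by
  classical
  rcases Nat.eq_zero_or_pos n with hn0 | hn
  · subst hn0
    refine ⟨U, fun _ _ => 0, hU, hp, subset_rfl, ?_, ?_, ?_⟩
    · intro k; exact k.elim0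
    · intro x _; exact linearIndependent_empty_type
    · intro i; exact i.elim0
  haveI : Nonempty (Fin n) := ⟨⟨0, hn⟩⟩
  obtain ⟨c, lam, hlam, hevk⟩ := hev
  choose w hw0 hweq using hevk
  set A : (Fin n → ℝ) → Matrix (Fin n) (Fin n) ℝ := fun x => ∑ i, c i • K i x with hAdef
  have hAsm : ∀ r c', ContDiffOn ℝ (⊤ : ℕ∞) (fun x => A x r c') U := by
    intro r c'
    have : (fun x => A x r c') = fun x => ∑ i, c i * K i x r c' := by
      funext x
      simp [hAdef, Matrix.sum_apply, Matrix.smul_apply, smul_eq_mul]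
    rw [this]
    exact ContDiffOn.sum fun i _ => contDiffOn_const.mul (hK i r c')
  have hweq' : ∀ j, (A p).mulVec (w j) = lam j • w j := hweq
  have hW : LinearIndependent ℝ w := by
    refine Module.End.eigenvectors_linearIndependent' ((A p).mulVecLin) lam hlam w ?_
    intro j
    refine Module.End.hasEigenvector_iff.2 ⟨Module.End.mem_eigenspace_iff.2 ?_, hw0 j⟩
    simpa [Matrix.mulVecLin_apply] using hweq' j
  have hcard : Fintype.card (Fin n) = Module.finrank ℝ (Fin n → ℝ) := by
    simp [Module.finrank_fin_fun]
  have key := fun k => eigpair hn U hU p hp A hAsm lam hlam w hw0 hweq' k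
  choose Vk v μ hVo hVp hVU hvCD hμCD hvp hμp heig using key
  set V0 : Set (Fin n → ℝ) := ⋂ k, Vk k with hV0def
  have hV0o : IsOpen V0 := isOpen_iInter_of_finite hVo
  have hV0p : p ∈ V0 := Set.mem_iInter.2 hVp
  have hV0k : ∀ k, V0 ⊆ Vk k := fun k => Set.iInter_subset _ k
  have hV0U : V0 ⊆ U := fun x hx => hVU ⟨0, hn⟩ (hV0k _ hx)
  -- determinant of the matrix of eigenvector fields
  set detf : (Fin n → ℝ) → ℝ :=
    fun x => (Matrix.of fun k j => v k x j).det with hdetf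
  have hdet_expand : detf = fun x =>
      ∑ σ : Equiv.Perm (Fin n), ((Equiv.Perm.sign σ : ℤ) : ℝ) * ∏ j, v (σ j) x j := by
    funext x
    simp only [hdetf]
    rw [Matrix.det_apply]
    refine Finset.sum_congr rfl fun σ _ => ?_
    rw [Units.smul_def, zsmul_eq_mul]
    rfl
  have hdetCD : ContDiffOn ℝ (⊤ : ℕ∞) detf V0 := by
    rw [hdet_expand]
    refine ContDiffOn.sum fun σ _ => contDiffOn_const.mul ?_
    refine contDiffOn_finprod Finset.univ _ fun j _ => ?_
    exact coordCD ((hvCD (σ j)).mono (hV0k (σ j))) j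
  have hdetp : detf p ≠ 0 := by
    have hMvp : (Matrix.of fun k j => v k p j) = Matrix.of fun k j => w k j := by
      ext k j
      rw [Matrix.of_apply, Matrix.of_apply, hvp k]
    have hWli : LinearIndependent ℝ (fun i => (Matrix.of fun k j => w k j) i) := hW
    have hWunit : IsUnit (Matrix.of fun k j => w k j) :=
      Matrix.linearIndependent_rows_iff_isUnit.1 hWli
    have := (Matrix.isUnit_iff_isUnit_det _).1 hWunit
    simp only [hdetf]
    rw [hMvp]
    exact this.ne_zero
  -- separation of the eigenvalue functions
  have hμC : ∀ k, ContinuousOn (μ k) V0 := fun k => ((hμCD k).continuousOn).mono (hV0k k)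
  set Dset : Fin n → Fin n → Set (Fin n → ℝ) :=
    fun j l => if j = l then Set.univ else (V0 ∩ (fun x => μ j x - μ l x) ⁻¹' {(0:ℝ)}ᶜ) with hDset
  have hDseto : ∀ j l, IsOpen (Dset j l) := by
    intro j l
    simp only [hDset]
    by_cases h : j = l
    · rw [if_pos h]; exact isOpen_univ
    · rw [if_neg h]
      exact ((hμC j).sub (hμC l)).isOpen_inter_preimage hV0o isOpen_compl_singleton
  have hDsetp : ∀ j l, p ∈ Dset j l := by
    intro j l
    simp only [hDset]
    by_cases h : j = l
    · rw [if_pos h]; exact Set.mem_univ p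
    · rw [if_neg h]
      refine ⟨hV0p, ?_⟩
      simp only [Set.mem_preimage, Set.mem_compl_iff, Set.mem_singleton_iff]
      rw [hμp j, hμp l]
      exact sub_ne_zero.2 fun hh => h (hlam hh)
  set V : Set (Fin n → ℝ) := (V0 ∩ detf ⁻¹' {(0:ℝ)}ᶜ) ∩ ⋂ j, ⋂ l, Dset j l with hVdef
  have hVo' : IsOpen V := by
    refine IsOpen.inter ?_ (isOpen_iInter_of_finite fun j => isOpen_iInter_of_finite (hDseto j))
    exact (hdetCD.continuousOn).isOpen_inter_preimage hV0o isOpen_compl_singleton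
  have hVp' : p ∈ V := by
    refine ⟨⟨hV0p, ?_⟩, Set.mem_iInter.2 fun j => Set.mem_iInter.2 fun l => hDsetp j l⟩
    simpa using hdetp
  have hVV0 : V ⊆ V0 := fun x hx => hx.1.1
  have hVU' : V ⊆ U := fun x hx => hV0U (hVV0 hx)
  have hdetx : ∀ x ∈ V, detf x ≠ 0 := by
    intro x hx
    have := hx.1.2
    simpa using this
  have hμnex : ∀ x ∈ V, ∀ j l, j ≠ l → μ j x ≠ μ l x := by
    intro x hx j l hjl
    have hxD : x ∈ Dset j l := by
      have := hx.2
      exact Set.mem_iInter.1 (Set.mem_iInter.1 this j) l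
    simp only [hDset, if_neg hjl] at hxD
    have := hxD.2
    simp only [Set.mem_preimage, Set.mem_compl_iff, Set.mem_singleton_iff] at this
    exact sub_ne_zero.1 this
  have hli : ∀ x ∈ V, LinearIndependent ℝ (fun k => v k x) := by
    intro x hx
    have hunit : IsUnit (Matrix.of fun k j => v k x j) :=
      (Matrix.isUnit_iff_isUnit_det _).2 (isUnit_iff_ne_zero.2 (hdetx x hx))
    exact Matrix.linearIndependent_rows_iff_isUnit.2 hunit
  refine ⟨V, v, hVo', hVp', hVU', ?_, hli, ?_⟩
  · intro k
    exact (hvCD k).mono (fun x hx => hV0k k (hVV0 hx))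
  · intro i k
    set lamf : (Fin n → ℝ) → ℝ :=
      fun x => ((K i x).mulVec (v k x)) ⬝ᵥ (v k x) / ((v k x) ⬝ᵥ (v k x)) with hlamf
    have hvne : ∀ x ∈ V, v k x ≠ 0 := fun x hx => (hli x hx).ne_zero k
    have hdenne : ∀ x ∈ V, (v k x) ⬝ᵥ (v k x) ≠ 0 :=
      fun x hx h => (hvne x hx) (dotProduct_self_eq_zero.1 h)
    have hvkV : ContDiffOn ℝ (⊤ : ℕ∞) (v k) V := (hvCD k).mono (fun x hx => hV0k k (hVV0 hx))
    have hnum : ContDiffOn ℝ (⊤ : ℕ∞) (fun x => ((K i x).mulVec (v k x)) ⬝ᵥ (v k x)) V := by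
      have hh : (fun x => ((K i x).mulVec (v k x)) ⬝ᵥ (v k x))
          = fun x => ∑ r, (∑ j, K i x r j * v k x j) * v k x r := by
        funext x; rfl
      rw [hh]
      refine ContDiffOn.sum fun r _ => ContDiffOn.mul ?_ (coordCD hvkV r)
      exact ContDiffOn.sum fun j _ => ((hK i r j).mono hVU').mul (coordCD hvkV j)
    have hden : ContDiffOn ℝ (⊤ : ℕ∞) (fun x => (v k x) ⬝ᵥ (v k x)) V := by
      have hh : (fun x => (v k x) ⬝ᵥ (v k x)) = fun x => ∑ r, v k x r * v k x r := by
        funext x; rfl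
      rw [hh]
      exact ContDiffOn.sum fun r _ => (coordCD hvkV r).mul (coordCD hvkV r)
    refine ⟨lamf, hnum.div hden hdenne, ?_⟩
    intro x hx
    have hxV0 := hVV0 hx
    have hxU := hVU' hx
    have hAKcomm : A x * K i x = K i x * A x := by
      have h1 : A x * K i x = ∑ j, c j • (K j x * K i x) := by
        simp only [hAdef]
        rw [Finset.sum_mul]
        exact Finset.sum_congr rfl fun j _ => smul_mul_assoc _ _ _
      have h2 : K i x * A x = ∑ j, c j • (K i x * K j x) := by
        simp only [hAdef]
        rw [Matrix.mul_sum]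
        exact Finset.sum_congr rfl fun j _ => mul_smul_comm _ _ _
      rw [h1, h2]
      exact Finset.sum_congr rfl fun j _ => by rw [hcomm j i x hxU]
    set u : Fin n → ℝ := (K i x).mulVec (v k x) with hu
    have hAu : (A x).mulVec u = μ k x • u := by
      calc (A x).mulVec ((K i x).mulVec (v k x))
          = (A x * K i x).mulVec (v k x) := by rw [Matrix.mulVec_mulVec]
        _ = (K i x * A x).mulVec (v k x) := by rw [hAKcomm]
        _ = (K i x).mulVec ((A x).mulVec (v k x)) := by rw [Matrix.mulVec_mulVec]
        _ = (K i x).mulVec (μ k x • v k x) := by rw [heig k x (hV0k k hxV0)]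
        _ = μ k x • (K i x).mulVec (v k x) := by rw [Matrix.mulVec_smul]
    have hlix := hli x hx
    set Bx : Module.Basis (Fin n) ℝ (Fin n → ℝ) := basisOfLinearIndependentOfCardEqFinrank hlix hcard with hBx
    have hBxcoe : ⇑Bx = fun j => v j x := coe_basisOfLinearIndependentOfCardEqFinrank _ _
    set a : Fin n → ℝ := fun j => Bx.repr u j with haa
    have hrep : ∑ j, a j • v j x = u := by
      have := Bx.sum_repr u
      rw [hBxcoe] at this
      simpa using this
    have hAu2 : (A x).mulVec u = ∑ j, (a j * μ j x) • v j x := by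
      rw [← hrep]
      have h1 : (A x).mulVec (∑ j, a j • v j x) = ∑ j, a j • ((A x).mulVec (v j x)) := by
        simp [Matrix.mulVec_sum, Matrix.mulVec_smul]
      rw [h1]
      refine Finset.sum_congr rfl fun j _ => ?_
      rw [heig j x (hV0k j hxV0), smul_smul]
    have hAu3 : μ k x • u = ∑ j, (μ k x * a j) • v j x := by
      rw [← hrep, Finset.smul_sum]
      exact Finset.sum_congr rfl fun j _ => smul_smul _ _ _
    have hzero : ∑ j, (a j * μ j x - μ k x * a j) • v j x = 0 := by
      rw [Finset.sum_congr rfl fun j _ => sub_smul (a j * μ j x) (μ k x * a j) (v j x),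
        Finset.sum_sub_distrib, ← hAu2, ← hAu3, hAu, sub_self]
    have hcoef := Fintype.linearIndependent_iff.1 hlix _ hzero
    have haj : ∀ j, j ≠ k → a j = 0 := by
      intro j hj
      have h0 := hcoef j
      have h2 : a j * (μ j x - μ k x) = 0 := by linear_combination h0
      rcases mul_eq_zero.1 h2 with h | h
      · exact h
      · exact absurd (sub_eq_zero.1 h) (hμnex x hx j k hj)
    have huak : u = a k • v k x := by
      rw [← hrep, Finset.sum_eq_single k (fun j _ hj => by rw [haj j hj, zero_smul]) (by simp)]
    have hlamval : lamf x = a k := by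
      simp only [hlamf]
      rw [← hu, huak, smul_dotProduct, smul_eq_mul, mul_div_assoc,
        div_self (hdenne x hx), mul_one]
    rw [huak, hlamval]
end

section
/- Let M₁(x),…,Mₙ(x) be smooth commuting matrix-valued functions near 0 in ℝⁿ with Mᵢ(0) = Eᵢᵢ. Then there exist constant matrices A^{(1)},…,A^{(n)} and diagonal matrices Dᵢ(x) with entries linear in x such that, setting A(x) = Σ_m x_m A^{(m)}, each Mᵢ agrees with (Id − A)(Eᵢᵢ + Dᵢ)(Id + A) up to terms of second and higher order in x (i.e., their values and first derivatives at 0 coincide). -/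
open Matrix

theorem stmt15 {n : ℕ} (U : Set (Fin n → ℝ)) (hU : IsOpen U) (h0 : (0 : Fin n → ℝ) ∈ U)
    (M : Fin n → (Fin n → ℝ) → Matrix (Fin n) (Fin n) ℝ)
    (hM : ∀ i r c, ContDiffOn ℝ (⊤ : ℕ∞) (fun x => M i x r c) U)
    (hcomm : ∀ i j, ∀ x ∈ U, M i x * M j x = M j x * M i x)
    (hM0 : ∀ i, M i 0 = Matrix.single i i (1 : ℝ)) :
    ∃ (Am : Fin n → Matrix (Fin n) (Fin n) ℝ) (d : Fin n → Fin n → Fin n → ℝ),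
      ∀ i p q,
        M i 0 p q =
          ((1 - ∑ m, (0 : Fin n → ℝ) m • Am m)
            * (Matrix.single i i (1 : ℝ)
              + Matrix.diagonal (fun r => ∑ m, (0 : Fin n → ℝ) m * d i r m))
            * (1 + ∑ m, (0 : Fin n → ℝ) m • Am m)) p q ∧
        fderiv ℝ (fun x => M i x p q) 0 =
          fderiv ℝ (fun x =>
            ((1 - ∑ m, x m • Am m)
              * (Matrix.single i i (1 : ℝ)
                + Matrix.diagonal (fun r => ∑ m, x m * d i r m))
              * (1 + ∑ m, x m • Am m)) p q) 0 := by
  have hUn : U ∈ nhds (0 : Fin n → ℝ) := hU.mem_nhds h0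
  have hMd : ∀ i p q, DifferentiableAt ℝ (fun x => M i x p q) 0 := fun i p q =>
    ((hM i p q).contDiffAt hUn).differentiableAt (by simp)
  set B : Fin n → Fin n → Fin n → Fin n → ℝ :=
    fun i m p q => fderiv ℝ (fun x => M i x p q) 0 (Pi.single m 1) with hB
  have hprod : ∀ i j p q, fderiv ℝ (fun x => (M i x * M j x) p q) 0
      = ∑ k, (M j 0 k q • fderiv ℝ (fun x => M i x p k) 0
            + M i 0 p k • fderiv ℝ (fun x => M j x k q) 0) := by
    intro i j p q
    have h1 : (fun x => (M i x * M j x) p q) = fun x => ∑ k, M i x p k * M j x k q := by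
      funext x; simp [Matrix.mul_apply]
    rw [h1, fderiv_fun_sum (fun k _ => ((hMd i p k).fun_mul (hMd j k q)))]
    congr 1; funext k
    rw [fderiv_fun_mul (hMd i p k) (hMd j k q)]
    abel
  have key : ∀ i j m p q,
      (if j = q then B i m p j else 0) + (if i = p then B j m i q else 0)
      = (if i = q then B j m p i else 0) + (if j = p then B i m j q else 0) := by
    intro i j m p q
    have heq : fderiv ℝ (fun x => (M i x * M j x) p q) 0
        = fderiv ℝ (fun x => (M j x * M i x) p q) 0 := by
      apply Filter.EventuallyEq.fderiv_eq
      filter_upwards [hUn] with x hx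
      rw [hcomm i j x hx]
    have h2 := congrArg (fun L => L (Pi.single m 1))
      (((hprod i j p q).symm.trans heq).trans (hprod j i p q))
    simp only [ContinuousLinearMap.sum_apply, ContinuousLinearMap.add_apply,
      ContinuousLinearMap.smul_apply, hM0, smul_eq_mul, ← hB] at h2
    simp only [Matrix.single_apply_same, Matrix.single, Matrix.of_apply,
      ite_mul, one_mul, zero_mul, mul_ite, mul_one, mul_zero] at h2
    have hsum : ∀ (c : Prop) [Decidable c] (a : Fin n) (f : Fin n → ℝ),
        (∑ x, if c then (if a = x then f x else 0) else 0) = if c then f a else 0 := by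
      intro c _ a f; split <;> simp
    simp only [Finset.sum_add_distrib, ite_and, Finset.sum_ite_eq, Finset.mem_univ,
      if_true, hsum] at h2
    exact h2
  -- consequences of the commutation relation
  have hzero : ∀ i m p q, p ≠ q → p ≠ i → q ≠ i → B i m p q = 0 := by
    intro i m p q hpq hpi hqi
    have h := key i p m p q
    simpa [hpq, Ne.symm hpi, Ne.symm hqi] using h.symm
  have hskew : ∀ i m p, p ≠ i → B p m p i + B i m p i = 0 := by
    intro i m p hpi
    have h := key i p m p i
    simpa [hpi, Ne.symm hpi, hpi.symm] using (h.symm)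
  -- analytic toolkit
  have hproj : ∀ m : Fin n, DifferentiableAt ℝ (fun x : Fin n → ℝ => x m) 0 := fun m =>
    (ContinuousLinearMap.proj m : (Fin n → ℝ) →L[ℝ] ℝ).differentiableAt
  have haffd : ∀ (c : ℝ) (w : Fin n → ℝ),
      DifferentiableAt ℝ (fun x : Fin n → ℝ => c + ∑ m, x m * w m) 0 := by
    intro c w
    refine (differentiableAt_const c).add ?_
    exact DifferentiableAt.fun_sum fun m _ => (hproj m).mul_const (w m)
  have haffF : ∀ (c : ℝ) (w : Fin n → ℝ) (m' : Fin n),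
      fderiv ℝ (fun x : Fin n → ℝ => c + ∑ m, x m * w m) 0 (Pi.single m' 1) = w m' := by
    intro c w m'
    have hd : ∀ m : Fin n, DifferentiableAt ℝ (fun x : Fin n → ℝ => x m * w m) 0 := fun m =>
      (hproj m).mul_const (w m)
    rw [fderiv_const_add, fderiv_fun_sum (fun m _ => hd m)]
    have hone : ∀ m : Fin n, fderiv ℝ (fun x : Fin n → ℝ => x m * w m) 0
        = w m • (ContinuousLinearMap.proj m : (Fin n → ℝ) →L[ℝ] ℝ) := by
      intro m
      rw [fderiv_mul_const (hproj m)]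
      congr 1
      exact (ContinuousLinearMap.proj m : (Fin n → ℝ) →L[ℝ] ℝ).fderiv
    simp only [hone, ContinuousLinearMap.sum_apply, ContinuousLinearMap.smul_apply,
      ContinuousLinearMap.proj_apply, smul_eq_mul, Pi.single_apply]
    simp [Finset.sum_ite_eq', mul_comm]
  have htriple : ∀ (c1 c2 c3 : ℝ) (w1 w2 w3 : Fin n → ℝ) (m' : Fin n),
      fderiv ℝ (fun x : Fin n → ℝ =>
        (c1 + ∑ m, x m * w1 m) * (c2 + ∑ m, x m * w2 m) * (c3 + ∑ m, x m * w3 m)) 0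
        (Pi.single m' 1)
      = c1 * c2 * w3 m' + c3 * (c1 * w2 m' + c2 * w1 m') := by
    intro c1 c2 c3 w1 w2 w3 m'
    rw [fderiv_fun_mul ((haffd c1 w1).fun_mul (haffd c2 w2)) (haffd c3 w3),
      fderiv_fun_mul (haffd c1 w1) (haffd c2 w2)]
    have haffF0 : ∀ w : Fin n → ℝ,
        fderiv ℝ (fun y : Fin n → ℝ => ∑ x, y x * w x) 0 (Pi.single m' 1) = w m' := by
      intro w; have := haffF 0 w m'; simp only [zero_add] at this; exact this
    simp [haffF, haffF0, smul_eq_mul]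
    ring
  -- the data
  refine ⟨fun m => Matrix.of fun p q => if p = q then 0 else B p m p q,
    fun i r m => B i m r r, fun i p q => ⟨?_, ?_⟩⟩
  · simp [hM0 i]
  · set Am : Fin n → Matrix (Fin n) (Fin n) ℝ :=
      fun m => Matrix.of fun p q => if p = q then 0 else B p m p q with hAm
    -- expand the entry function
    have hfun : (fun x : Fin n → ℝ =>
        ((1 - ∑ m, x m • Am m)
          * (Matrix.single i i (1 : ℝ)
            + Matrix.diagonal (fun r => ∑ m, x m * B i m r r))
          * (1 + ∑ m, x m • Am m)) p q)
      = fun x => ∑ k,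
          (((if p = k then (1:ℝ) else 0) + ∑ m, x m * (-(Am m p k)))
            * ((if k = i then (1:ℝ) else 0) + ∑ m, x m * B i m k k)
            * ((if k = q then (1:ℝ) else 0) + ∑ m, x m * Am m k q)) := by
      funext x
      have hmid : Matrix.single i i (1 : ℝ)
          + Matrix.diagonal (fun r => ∑ m, x m * B i m r r)
          = Matrix.diagonal (fun r => (if r = i then (1:ℝ) else 0) + ∑ m, x m * B i m r r) := by
        ext r c
        rcases eq_or_ne r c with h | h
        · simp [Matrix.single, Matrix.diagonal_apply, h, eq_comm]
        · have hnc : ¬(i = r ∧ i = c) := fun hh => h (hh.1 ▸ hh.2)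
          simp [Matrix.single, Matrix.diagonal_apply, h, hnc]
      rw [hmid, Matrix.mul_apply]
      refine Finset.sum_congr rfl fun k _ => ?_
      rw [Matrix.mul_diagonal]
      have e1 : (1 - ∑ m, x m • Am m) p k
          = (if p = k then (1:ℝ) else 0) + ∑ m, x m * (-(Am m p k)) := by
        simp [Matrix.sub_apply, Matrix.one_apply, Matrix.sum_apply, sub_eq_add_neg,
          Finset.sum_neg_distrib, mul_neg]
      have e3 : (1 + ∑ m, x m • Am m) k q
          = (if k = q then (1:ℝ) else 0) + ∑ m, x m * Am m k q := by
        simp [Matrix.add_apply, Matrix.one_apply, Matrix.sum_apply]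
      rw [e1, e3]
    rw [hfun]
    -- now compare the two continuous linear maps on the standard basis
    refine ContinuousLinearMap.coe_injective (Module.Basis.ext (Pi.basisFun ℝ (Fin n)) fun m => ?_)
    simp only [Pi.basisFun_apply, ContinuousLinearMap.coe_coe]
    have hR : fderiv ℝ (fun x : Fin n → ℝ => ∑ k,
          (((if p = k then (1:ℝ) else 0) + ∑ m, x m * (-(Am m p k)))
            * ((if k = i then (1:ℝ) else 0) + ∑ m, x m * B i m k k)
            * ((if k = q then (1:ℝ) else 0) + ∑ m, x m * Am m k q))) 0 (Pi.single m 1)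
        = ∑ k, ((if p = k then (1:ℝ) else 0) * (if k = i then (1:ℝ) else 0) * Am m k q
            + (if k = q then (1:ℝ) else 0) *
              ((if p = k then (1:ℝ) else 0) * B i m k k
                + (if k = i then (1:ℝ) else 0) * (-(Am m p k)))) := by
      rw [fderiv_fun_sum (fun k _ => ((haffd _ _).fun_mul (haffd _ _)).fun_mul (haffd _ _))]
      rw [ContinuousLinearMap.sum_apply]
      exact Finset.sum_congr rfl fun k _ => htriple _ _ _ _ _ _ m
    rw [hR]
    show B i m p q = _
    simp only [ite_mul, one_mul, zero_mul, mul_ite, mul_one, mul_zero, mul_neg,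
      Finset.sum_add_distrib]
    simp only [Finset.sum_ite_eq', Finset.mem_univ, if_true]
    by_cases hpq : p = q
    · by_cases hpi : p = i
      · have hqi : q = i := hpq ▸ hpi
        simp [Am, hpi, hpq, hqi]
      · have hqi : ¬ q = i := fun h => hpi (hpq.trans h)
        simp [Am, hpi, hpq, hqi]
    · by_cases hpi : p = i
      · have hqi : ¬ q = i := fun h => hpq (hpi.trans h.symm)
        simp [Am, hpi, hpq, hqi, Ne.symm hqi]
      · by_cases hqi : q = i
        · have hs := hskew i m p hpi
          simp only [hqi] at *
          simp [Am, hpi, hpq]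
          linarith
        · simp [hpq, hpi, hqi, hzero i m p q hpq hpi hqi]
end
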